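/- The 8-fold flat application B B B B B B B B (all applications nested to the left) is βη-equivalent to λf.λg.λx.λy.λz. f (g x y z). -/
import Mathlib


/-- Untyped lambda terms in de Bruijn representation. -/
inductive Lam where
  | var : Nat → Lam
  | app : Lam → Lam → Lam
  | lam : Lam → Lam
deriving DecidableEq

namespace Lam

/-- Lift (shift by one) all free variables with index ≥ `c`. -/
def lift (c : Nat) : Lam → Lam
  | var n => if n < c then var n else var (n + 1)
  | app a b => app (lift c a) (lift c b)
  | lam a => lam (lift (c + 1) a)

/-- Substitute `s` for the free variable with index `d`. -/
def subst (d : Nat) (s : Lam) : Lam → Lam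
  | var n => if n = d then s else if d < n then var (n - 1) else var n
  | app a b => app (subst d s a) (subst d s b)
  | lam a => lam (subst (d + 1) (lift 0 s) a)

/-- One-step βη-reduction (compatible closure of β and η). -/
inductive Step : Lam → Lam → Prop
  | beta (a b : Lam) : Step (app (lam a) b) (subst 0 b a)
  | eta (a : Lam) : Step (lam (app (lift 0 a) (var 0))) a
  | appL {a a' : Lam} (b : Lam) : Step a a' → Step (app a b) (app a' b)
  | appR (a : Lam) {b b' : Lam} : Step b b' → Step (app a b) (app a b')
  | xi {a a' : Lam} : Step a a' → Step (lam a) (lam a')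

/-- βη-equivalence: the equivalence relation generated by one-step βη-reduction. -/
def BetaEtaEq (a b : Lam) : Prop := Relation.EqvGen Step a b

/-- The B combinator λf.λg.λx. f (g x). -/
def B : Lam := lam (lam (lam (app (var 2) (app (var 1) (var 0)))))

/-- `flat X n` is the (n+1)-fold flat left application, i.e. `X_(n+1)`:
`flat X 0 = X = X_(1)` and `flat X (n+1) = (flat X n) X = X_(n+2)`. -/
def flat (X : Lam) : Nat → Lam
  | 0 => X
  | n + 1 => app (flat X n) X

end Lam

open Lam

namespace Lam

/-- Leftmost one-step β-reduction, if any. -/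
def reduce1 : Lam → Option Lam
  | var _ => none
  | lam a => (reduce1 a).map lam
  | app (lam a) b => some (subst 0 b a)
  | app (var n) b => (reduce1 b).map (app (var n))
  | app (app a b) c =>
    match reduce1 (app a b) with
    | some x => some (app x c)
    | none => (reduce1 c).map (app (app a b))

theorem reduce1_sound : ∀ {a b : Lam}, reduce1 a = some b → Step a b := by
  intro a
  induction a with
  | var n => intro b h; simp [reduce1] at h
  | lam a ih =>
    intro b h
    simp only [reduce1, Option.map_eq_some_iff] at h
    obtain ⟨a', ha, rfl⟩ := h
    exact Step.xi (ih ha)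
  | app a c iha ihc =>
    intro b h
    cases a with
    | lam a =>
      simp only [reduce1] at h
      cases h
      exact Step.beta a c
    | var n =>
      simp only [reduce1, Option.map_eq_some_iff] at h
      obtain ⟨c', hc, rfl⟩ := h
      exact Step.appR _ (ihc hc)
    | app a1 a2 =>
      simp only [reduce1] at h
      cases hr : reduce1 (app a1 a2) with
      | some x => rw [hr] at h; cases h; exact Step.appL _ (iha hr)
      | none =>
        rw [hr] at h
        simp only [Option.map_eq_some_iff] at h
        obtain ⟨c', hc, rfl⟩ := h
        exact Step.appR _ (ihc hc)

def reduceN : Nat → Lam → Lam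
  | 0, a => a
  | n + 1, a =>
    match reduce1 a with
    | some b => reduceN n b
    | none => a

theorem reduceN_sound (n : Nat) (a : Lam) : BetaEtaEq a (reduceN n a) := by
  induction n generalizing a with
  | zero => exact Relation.EqvGen.refl a
  | succ n ih =>
    cases hr : reduce1 a with
    | some b =>
      simp only [reduceN, hr]
      exact Relation.EqvGen.trans _ _ _
        (Relation.EqvGen.rel _ _ (reduce1_sound hr)) (ih b)
    | none => simp only [reduceN, hr]; exact Relation.EqvGen.refl a

end Lam


/-- The 8-fold flat application B_(8) is βη-equivalent to λf.λg.λx.λy.λz. f (g x y z). -/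
theorem stmt1 :
    BetaEtaEq (flat B 7)
      (lam (lam (lam (lam (lam
        (app (var 4) (app (app (app (var 3) (var 2)) (var 1)) (var 0)))))))) := by
  have h := reduceN_sound 100 (flat B 7)
  rwa [show reduceN 100 (flat B 7) =
    (lam (lam (lam (lam (lam
      (app (var 4) (app (app (app (var 3) (var 2)) (var 1)) (var 0)))))))) from by decide] at h
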